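/- Let D₁, D₂ be smooth vector fields on an open set X ⊆ ℝ^n and define the iterated Lie brackets recursively by [D₁,D₂]^{(2)} := [D₁,D₂] and [D₁,D₂]^{(n)} := [D₁, [D₁,D₂]^{(n-1)}] for n ≥ 3. If x ∈ X is a point and n ≥ 1 is such that the integral curves γ₁, γ₂ of D₁, D₂ through x satisfy γ₁^{(k)}(0) = γ₂^{(k)}(0) for all 0 ≤ k ≤ n, then γ₂^{(n+1)}(0) − γ₁^{(n+1)}(0) = [D₁,D₂]^{(n+1)}(x). -/

import Mathlib

/-- Lie bracket of vector fields on `ℝ^n`. -/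
noncomputable def lieBracketVF {n : ℕ} (D₁ D₂ : (Fin n → ℝ) → (Fin n → ℝ)) :
    (Fin n → ℝ) → (Fin n → ℝ) :=
  fun y => fderiv ℝ D₂ y (D₁ y) - fderiv ℝ D₁ y (D₂ y)

/-- Iterated Lie brackets: `[D₁,D₂]⁽¹⁾ = D₂ - D₁`, `[D₁,D₂]⁽ᵏ⁺¹⁾ = [D₁, [D₁,D₂]⁽ᵏ⁾]`,
so in particular `[D₁,D₂]⁽²⁾ = [D₁,D₂]`. -/
noncomputable def iterLie {n : ℕ} (D₁ D₂ : (Fin n → ℝ) → (Fin n → ℝ)) :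
    ℕ → ((Fin n → ℝ) → (Fin n → ℝ))
  | 0 => fun _ => 0
  | 1 => fun y => D₂ y - D₁ y
  | (k + 2) => lieBracketVF D₁ (iterLie D₁ D₂ (k + 1))

namespace Stmt3Aux

variable {m : ℕ}

/-- Iterated derivative of an integral curve of `D`, as a function of the base point:
`γ⁽ᵏ⁾(t) = pushVF D k (γ t)`. -/
noncomputable def pushVF (D : (Fin m → ℝ) → (Fin m → ℝ)) : ℕ → ((Fin m → ℝ) → (Fin m → ℝ))
  | 0 => fun y => y
  | (k+1) => fun y => fderiv ℝ (pushVF D k) y (D y)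

lemma pushVF_one (D : (Fin m → ℝ) → (Fin m → ℝ)) (y : Fin m → ℝ) : pushVF D 1 y = D y := by
  simp [pushVF, fderiv_id']

variable {X : Set (Fin m → ℝ)}

lemma diffAt {F : Type*} [NormedAddCommGroup F] [NormedSpace ℝ F] (hX : IsOpen X)
    {f : (Fin m → ℝ) → F} (hf : ContDiffOn ℝ (⊤ : ℕ∞) f X)
    {y : Fin m → ℝ} (hy : y ∈ X) : DifferentiableAt ℝ f y :=
  (hf.contDiffAt (hX.mem_nhds hy)).differentiableAt (by simp)

lemma smooth_push (hX : IsOpen X) {D : (Fin m → ℝ) → (Fin m → ℝ)} (hD : ContDiffOn ℝ (⊤ : ℕ∞) D X) :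
    ∀ k, ContDiffOn ℝ (⊤ : ℕ∞) (pushVF D k) X
  | 0 => by exact contDiffOn_id
  | (k+1) => by
      simp only [pushVF]
      exact ((smooth_push hX hD k).fderiv_of_isOpen hX (by simp)).clm_apply hD

lemma smooth_iterLie (hX : IsOpen X) {D₁ D₂ : (Fin m → ℝ) → (Fin m → ℝ)}
    (hD₁ : ContDiffOn ℝ (⊤ : ℕ∞) D₁ X) (hD₂ : ContDiffOn ℝ (⊤ : ℕ∞) D₂ X) :
    ∀ k, ContDiffOn ℝ (⊤ : ℕ∞) (iterLie D₁ D₂ k) X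
  | 0 => by simpa [iterLie] using contDiffOn_const
  | 1 => by simpa [iterLie] using hD₂.sub hD₁
  | (k+2) => by
      have ih := smooth_iterLie hX hD₁ hD₂ (k+1)
      simp only [iterLie, lieBracketVF]
      exact ((ih.fderiv_of_isOpen hX (by simp)).clm_apply hD₁).sub
        ((hD₁.fderiv_of_isOpen hX (by simp)).clm_apply ih)

lemma iterated_eq (hX : IsOpen X) {D : (Fin m → ℝ) → (Fin m → ℝ)} (hD : ContDiffOn ℝ (⊤ : ℕ∞) D X)
    {γ : ℝ → (Fin m → ℝ)} (hγX : ∀ t, γ t ∈ X) (hγ : ∀ t, HasDerivAt γ (D (γ t)) t) :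
    ∀ k t, iteratedDeriv k γ t = pushVF D k (γ t) := by
  intro k
  induction k with
  | zero => intro t; simp [pushVF]
  | succ k ih =>
    intro t
    rw [iteratedDeriv_succ, funext ih]
    have hF : HasFDerivAt (pushVF D k) (fderiv ℝ (pushVF D k) (γ t)) (γ t) :=
      (diffAt hX (smooth_push hX hD k) (hγX t)).hasFDerivAt
    rw [← Function.comp_def (pushVF D k) γ, (hF.comp_hasDerivAt t (hγ t)).deriv]
    rfl

/-- `W` is, on `X`, a sum of smooth bundle maps applied to the differences
`pushVF D₂ (j+1) - pushVF D₁ (j+1)` for `j < k`. -/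
def Rep (X : Set (Fin m → ℝ)) (D₁ D₂ : (Fin m → ℝ) → (Fin m → ℝ)) (k : ℕ)
    (W : (Fin m → ℝ) → (Fin m → ℝ)) : Prop :=
  ∃ A : ℕ → (Fin m → ℝ) → ((Fin m → ℝ) →L[ℝ] (Fin m → ℝ)),
    (∀ j, ContDiffOn ℝ (⊤ : ℕ∞) (A j) X) ∧
    ∀ y ∈ X, W y = ∑ j ∈ Finset.range k,
      A j y (pushVF D₂ (j+1) y - pushVF D₁ (j+1) y)

variable {D₁ D₂ : (Fin m → ℝ) → (Fin m → ℝ)} {k : ℕ}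

lemma rep_congr {W W' : (Fin m → ℝ) → (Fin m → ℝ)} (h : Rep X D₁ D₂ k W')
    (he : ∀ y ∈ X, W y = W' y) : Rep X D₁ D₂ k W := by
  obtain ⟨A, hA, hr⟩ := h
  exact ⟨A, hA, fun y hy => (he y hy).trans (hr y hy)⟩

lemma rep_zero : Rep X D₁ D₂ k (fun _ => 0) :=
  ⟨fun _ _ => 0, fun _ => contDiffOn_const, fun y _ => by simp⟩

lemma rep_add {W₁ W₂ : (Fin m → ℝ) → (Fin m → ℝ)} (h₁ : Rep X D₁ D₂ k W₁)
    (h₂ : Rep X D₁ D₂ k W₂) : Rep X D₁ D₂ k (fun y => W₁ y + W₂ y) := by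
  obtain ⟨A, hA, hr⟩ := h₁
  obtain ⟨B, hB, hs⟩ := h₂
  refine ⟨fun j y => A j y + B j y, fun j => (hA j).add (hB j), fun y hy => ?_⟩
  simp only [hr y hy, hs y hy, ContinuousLinearMap.add_apply, Finset.sum_add_distrib]

lemma rep_neg {W : (Fin m → ℝ) → (Fin m → ℝ)} (h : Rep X D₁ D₂ k W) :
    Rep X D₁ D₂ k (fun y => -W y) := by
  obtain ⟨A, hA, hr⟩ := h
  refine ⟨fun j y => -(A j y), fun j => (hA j).neg, fun y hy => ?_⟩
  simp only [hr y hy, ContinuousLinearMap.neg_apply, Finset.sum_neg_distrib]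

lemma rep_mono {k' : ℕ} (hkk : k ≤ k') {W : (Fin m → ℝ) → (Fin m → ℝ)}
    (h : Rep X D₁ D₂ k W) : Rep X D₁ D₂ k' W := by
  obtain ⟨A, hA, hr⟩ := h
  refine ⟨fun j => if j < k then A j else fun _ => 0,
    fun j => by dsimp only; split <;> [exact hA j; exact contDiffOn_const], fun y hy => ?_⟩
  rw [hr y hy]
  rw [← Finset.sum_subset (Finset.range_subset_range.2 hkk)]
  · exact Finset.sum_congr rfl fun j hj => by
      dsimp only; rw [if_pos (Finset.mem_range.1 hj)]
  · intro j _ hj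
    dsimp only
    rw [if_neg (fun h => hj (Finset.mem_range.2 h))]
    simp

lemma rep_single {j : ℕ} (hj : j < k) {B : (Fin m → ℝ) → ((Fin m → ℝ) →L[ℝ] (Fin m → ℝ))}
    (hB : ContDiffOn ℝ (⊤ : ℕ∞) B X) :
    Rep X D₁ D₂ k (fun y => B y (pushVF D₂ (j+1) y - pushVF D₁ (j+1) y)) := by
  refine ⟨fun i => if i = j then B else fun _ => 0,
    fun i => by dsimp only; split <;> [exact hB; exact contDiffOn_const], fun y hy => ?_⟩
  rw [Finset.sum_eq_single j]
  · dsimp only; rw [if_pos rfl]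
  · intro i _ hij
    dsimp only; rw [if_neg hij]; simp
  · intro hjmem
    exact absurd (Finset.mem_range.2 hj) hjmem

lemma rep_comp {W : (Fin m → ℝ) → (Fin m → ℝ)} (h : Rep X D₁ D₂ k W)
    {B : (Fin m → ℝ) → ((Fin m → ℝ) →L[ℝ] (Fin m → ℝ))} (hB : ContDiffOn ℝ (⊤ : ℕ∞) B X) :
    Rep X D₁ D₂ k (fun y => B y (W y)) := by
  obtain ⟨A, hA, hr⟩ := h
  refine ⟨fun j y => (B y).comp (A j y), fun j => hB.clm_comp (hA j), fun y hy => ?_⟩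
  simp only [hr y hy, map_sum, ContinuousLinearMap.comp_apply]

lemma rep_sum {s : Finset ℕ} {W : ℕ → (Fin m → ℝ) → (Fin m → ℝ)}
    (h : ∀ j ∈ s, Rep X D₁ D₂ k (W j)) :
    Rep X D₁ D₂ k (fun y => ∑ j ∈ s, W j y) := by
  classical
  induction s using Finset.induction_on with
  | empty => simpa using (rep_zero : Rep X D₁ D₂ k _)
  | @insert a s hni ih =>
    have := rep_add (h a (Finset.mem_insert_self a s))
      (ih fun j hj => h j (Finset.mem_insert_of_mem hj))
    exact rep_congr this fun y hy => by rw [Finset.sum_insert hni]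

lemma dG (hX : IsOpen X) (hD₁ : ContDiffOn ℝ (⊤ : ℕ∞) D₁ X) (hD₂ : ContDiffOn ℝ (⊤ : ℕ∞) D₂ X)
    (j : ℕ) {y : Fin m → ℝ} (hy : y ∈ X) :
    fderiv ℝ (fun z => pushVF D₂ (j+1) z - pushVF D₁ (j+1) z) y (D₂ y)
    = (pushVF D₂ (j+2) y - pushVF D₁ (j+2) y)
      - fderiv ℝ (pushVF D₁ (j+1)) y (pushVF D₂ 1 y - pushVF D₁ 1 y) := by
  have hb := diffAt hX (smooth_push hX hD₂ (j+1)) hy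
  have ha := diffAt hX (smooth_push hX hD₁ (j+1)) hy
  rw [fderiv_fun_sub hb ha]
  have e2 : pushVF D₂ (j+2) y = fderiv ℝ (pushVF D₂ (j+1)) y (D₂ y) := rfl
  have e1 : pushVF D₁ (j+2) y = fderiv ℝ (pushVF D₁ (j+1)) y (D₁ y) := rfl
  rw [e1, e2]
  simp only [pushVF_one, ContinuousLinearMap.sub_apply, map_sub]
  abel

lemma rep_fderiv (hX : IsOpen X) (hD₁ : ContDiffOn ℝ (⊤ : ℕ∞) D₁ X) (hD₂ : ContDiffOn ℝ (⊤ : ℕ∞) D₂ X)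
    {W : (Fin m → ℝ) → (Fin m → ℝ)} (h : Rep X D₁ D₂ k W) :
    Rep X D₁ D₂ (k+1) (fun y => fderiv ℝ W y (D₂ y)) := by
  obtain ⟨A, hA, hr⟩ := h
  have hGs : ∀ j, ContDiffOn ℝ (⊤ : ℕ∞) (fun z => pushVF D₂ j z - pushVF D₁ j z) X :=
    fun j => (smooth_push hX hD₂ j).sub (smooth_push hX hD₁ j)
  have key : ∀ y ∈ X, fderiv ℝ W y (D₂ y) =
      ∑ j ∈ Finset.range k,
        ((A j y) (pushVF D₂ (j+2) y - pushVF D₁ (j+2) y) +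
         (-((A j y) (fderiv ℝ (pushVF D₁ (j+1)) y (pushVF D₂ 1 y - pushVF D₁ 1 y))) +
          (fderiv ℝ (A j) y (D₂ y)) (pushVF D₂ (j+1) y - pushVF D₁ (j+1) y))) := by
    intro y hy
    have hWf : fderiv ℝ W y = fderiv ℝ
        (fun z => ∑ j ∈ Finset.range k, A j z (pushVF D₂ (j+1) z - pushVF D₁ (j+1) z)) y :=
      Filter.EventuallyEq.fderiv_eq (Filter.eventuallyEq_of_mem (hX.mem_nhds hy) hr)
    rw [hWf, fderiv_fun_sum (fun j _ => diffAt hX ((hA j).clm_apply (hGs (j+1))) hy),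
      ContinuousLinearMap.sum_apply]
    refine Finset.sum_congr rfl fun j hj => ?_
    rw [fderiv_clm_apply (diffAt hX (hA j) hy) (diffAt hX (hGs (j+1)) hy)]
    rw [ContinuousLinearMap.add_apply, ContinuousLinearMap.comp_apply,
      ContinuousLinearMap.flip_apply, dG hX hD₁ hD₂ j hy, map_sub]
    abel
  refine rep_congr (rep_sum fun j hj => ?_) key
  have hj' : j < k := Finset.mem_range.1 hj
  refine rep_add (rep_single (by omega : j + 1 < k + 1) (hA j))
    (rep_add (rep_neg (rep_comp
        (rep_single (by omega : 0 < k + 1)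
          ((smooth_push hX hD₁ (j+1)).fderiv_of_isOpen hX (by simp))) (hA j)))
      (rep_single (by omega : j < k + 1)
        (((hA j).fderiv_of_isOpen hX (by simp)).clm_apply hD₂)))

lemma main (hX : IsOpen X) (hD₁ : ContDiffOn ℝ (⊤ : ℕ∞) D₁ X) (hD₂ : ContDiffOn ℝ (⊤ : ℕ∞) D₂ X) :
    ∀ k, Rep X D₁ D₂ k
      (fun y => (pushVF D₂ (k+1) y - pushVF D₁ (k+1) y) - iterLie D₁ D₂ (k+1) y) := by
  intro k
  induction k with
  | zero =>
    refine rep_congr rep_zero fun y hy => ?_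
    simp [pushVF_one, iterLie]
  | succ k ih =>
    have key : ∀ y ∈ X,
        (pushVF D₂ (k+1+1) y - pushVF D₁ (k+1+1) y) - iterLie D₁ D₂ (k+1+1) y =
        fderiv ℝ (fun z => (pushVF D₂ (k+1) z - pushVF D₁ (k+1) z) - iterLie D₁ D₂ (k+1) z) y
          (D₂ y)
        + fderiv ℝ (pushVF D₁ (k+1)) y (pushVF D₂ 1 y - pushVF D₁ 1 y)
        + fderiv ℝ (iterLie D₁ D₂ (k+1)) y (pushVF D₂ 1 y - pushVF D₁ 1 y)
        + fderiv ℝ D₁ y (pushVF D₂ (k+1) y - pushVF D₁ (k+1) y)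
        + (- fderiv ℝ D₁ y
            ((pushVF D₂ (k+1) y - pushVF D₁ (k+1) y) - iterLie D₁ D₂ (k+1) y)) := by
      intro y hy
      have ha := diffAt hX (smooth_push hX hD₁ (k+1)) hy
      have hb := diffAt hX (smooth_push hX hD₂ (k+1)) hy
      have hE := diffAt hX (smooth_iterLie hX hD₁ hD₂ (k+1)) hy
      have hfS : fderiv ℝ
          (fun z => (pushVF D₂ (k+1) z - pushVF D₁ (k+1) z) - iterLie D₁ D₂ (k+1) z) y
          = fderiv ℝ (pushVF D₂ (k+1)) y - fderiv ℝ (pushVF D₁ (k+1)) y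
            - fderiv ℝ (iterLie D₁ D₂ (k+1)) y := by
        rw [fderiv_fun_sub (f := fun z => pushVF D₂ (k+1) z - pushVF D₁ (k+1) z) (hb.sub ha) hE, fderiv_fun_sub hb ha]
      have e2 : pushVF D₂ (k+1+1) y = fderiv ℝ (pushVF D₂ (k+1)) y (D₂ y) := rfl
      have e1 : pushVF D₁ (k+1+1) y = fderiv ℝ (pushVF D₁ (k+1)) y (D₁ y) := rfl
      have eL : iterLie D₁ D₂ (k+1+1) y
          = fderiv ℝ (iterLie D₁ D₂ (k+1)) y (D₁ y)
            - fderiv ℝ D₁ y (iterLie D₁ D₂ (k+1) y) := rfl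
      rw [e1, e2, eL, hfS]
      simp only [pushVF_one, ContinuousLinearMap.sub_apply, map_sub]
      abel
    refine rep_congr (rep_add (rep_add (rep_add (rep_add
      (rep_fderiv hX hD₁ hD₂ ih)
      (rep_single (by omega : 0 < k + 1) ((smooth_push hX hD₁ (k+1)).fderiv_of_isOpen hX (by simp))))
      (rep_single (by omega : 0 < k + 1)
        ((smooth_iterLie hX hD₁ hD₂ (k+1)).fderiv_of_isOpen hX (by simp))))
      (rep_single (by omega : k < k + 1) (hD₁.fderiv_of_isOpen hX (by simp))))
      (rep_mono (Nat.le_succ k) (rep_neg (rep_comp ih (hD₁.fderiv_of_isOpen hX (by simp)))))) key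

end Stmt3Aux

open Stmt3Aux in
/-- If the integral curves of `D₁`, `D₂` through `x` agree to order `n` at `0`, then
the difference of their `(n+1)`-st derivatives is the iterated Lie bracket at `x`. -/
theorem stmt3 {m : ℕ} (X : Set (Fin m → ℝ)) (hX : IsOpen X)
    (D₁ D₂ : (Fin m → ℝ) → (Fin m → ℝ))
    (hD₁ : ContDiffOn ℝ (⊤ : ℕ∞) D₁ X) (hD₂ : ContDiffOn ℝ (⊤ : ℕ∞) D₂ X)
    (x : Fin m → ℝ) (hx : x ∈ X)
    (γ₁ γ₂ : ℝ → (Fin m → ℝ))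
    (hγ₁0 : γ₁ 0 = x) (hγ₂0 : γ₂ 0 = x)
    (hγ₁X : ∀ t, γ₁ t ∈ X) (hγ₂X : ∀ t, γ₂ t ∈ X)
    (hγ₁ : ∀ t, HasDerivAt γ₁ (D₁ (γ₁ t)) t)
    (hγ₂ : ∀ t, HasDerivAt γ₂ (D₂ (γ₂ t)) t)
    (n : ℕ) (hn : 1 ≤ n)
    (hjets : ∀ k ≤ n, iteratedDeriv k γ₁ 0 = iteratedDeriv k γ₂ 0) :
    iteratedDeriv (n + 1) γ₂ 0 - iteratedDeriv (n + 1) γ₁ 0 = iterLie D₁ D₂ (n + 1) x := by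
  have h1 := iterated_eq hX hD₁ hγ₁X hγ₁
  have h2 := iterated_eq hX hD₂ hγ₂X hγ₂
  obtain ⟨A, hA, hrep⟩ := main hX hD₁ hD₂ n
  have hx' := hrep x hx
  have hz : ∀ j ∈ Finset.range n, A j x (pushVF D₂ (j+1) x - pushVF D₁ (j+1) x) = 0 := by
    intro j hj
    have hj' : j + 1 ≤ n := Finset.mem_range.1 hj
    have heq : pushVF D₁ (j+1) x = pushVF D₂ (j+1) x :=
      calc pushVF D₁ (j+1) x = pushVF D₁ (j+1) (γ₁ 0) := by rw [hγ₁0]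
        _ = iteratedDeriv (j+1) γ₁ 0 := (h1 (j+1) 0).symm
        _ = iteratedDeriv (j+1) γ₂ 0 := hjets _ hj'
        _ = pushVF D₂ (j+1) (γ₂ 0) := h2 (j+1) 0
        _ = pushVF D₂ (j+1) x := by rw [hγ₂0]
    rw [heq, sub_self, map_zero]
  rw [Finset.sum_eq_zero hz] at hx'
  have hG : iteratedDeriv (n+1) γ₂ 0 - iteratedDeriv (n+1) γ₁ 0
      = pushVF D₂ (n+1) x - pushVF D₁ (n+1) x := by
    rw [h1 (n+1) 0, h2 (n+1) 0, hγ₁0, hγ₂0]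
  rw [hG]
  exact sub_eq_zero.mp hx'
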